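/- Let G be a finite simple graph with ordered 1-WL labels ℓ^(t). For any vertices v, w of G, if deg(v) > deg(w) then ℓ_v^(1) > ℓ_w^(1). (Degree consistency, Theorem 1(1).) -/
import Mathlib


open Finset

/-- The message of a vertex at a refinement step: its current label paired with
the list of its neighbours' labels sorted in nondecreasing order. Messages are
compared lexicographically (first component first, then the lists in the
lexicographic order on lists, in which a proper prefix is smaller). -/
def wlMessage {V : Type*} [Fintype V] [DecidableEq V]
    (G : SimpleGraph V) [DecidableRel G.Adj] (ℓ : V → ℕ) (v : V) : ℕ ×ₗ List ℕ :=
  toLex (ℓ v, ((G.neighborFinset v).val.map ℓ).sort (· ≤ ·))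

/-- One step of ordered 1-WL refinement: the new label of `v` is the 0-based
rank of its message in the increasingly sorted list of distinct messages,
i.e. the number of distinct messages that are strictly smaller. -/
def wlStep {V : Type*} [Fintype V] [DecidableEq V]
    (G : SimpleGraph V) [DecidableRel G.Adj] (ℓ : V → ℕ) (v : V) : ℕ :=
  ((Finset.univ.image (wlMessage G ℓ)).filter (fun m => m < wlMessage G ℓ v)).card

/-- Ordered 1-WL labels: `wlLabel G t v` is the label `ℓ_v^(t)`, starting from
the constant label `1` at step `0`. -/
def wlLabel {V : Type*} [Fintype V] [DecidableEq V]
    (G : SimpleGraph V) [DecidableRel G.Adj] : ℕ → V → ℕ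
  | 0 => fun _ => 1
  | (t + 1) => wlStep G (wlLabel G t)

lemma wl_sort_replicate (n : ℕ) :
    (Multiset.replicate n (1:ℕ)).sort (·≤·) = List.replicate n 1 := by
  rw [List.eq_replicate_iff]
  refine ⟨by simp, fun b hb => ?_⟩
  have := Multiset.mem_sort (α := ℕ) (r := (·≤·)) |>.mp hb
  exact (Multiset.mem_replicate.mp this).2

lemma wl_rep_lt {n m : ℕ} (h : n < m) :
    List.replicate n (1:ℕ) < List.replicate m 1 := by
  show List.Lex (· < ·) _ _
  induction n generalizing m with
  | zero =>
    cases m with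
    | zero => omega
    | succ m => exact List.Lex.nil
  | succ n ih =>
    cases m with
    | zero => omega
    | succ m => exact List.Lex.cons (ih (by omega))

lemma wlMessage_one {V : Type*} [Fintype V] [DecidableEq V]
    (G : SimpleGraph V) [DecidableRel G.Adj] (v : V) :
    wlMessage G (fun _ => 1) v = toLex (1, List.replicate (G.degree v) 1) := by
  have hmap : ((G.neighborFinset v).val.map (fun _ => (1:ℕ)))
      = Multiset.replicate (G.degree v) 1 := by
    rw [Multiset.map_const']
    rfl
  unfold wlMessage
  rw [hmap, wl_sort_replicate]

/-- **Degree consistency (Theorem 1(1)).** For any vertices `v, w` of a finite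
simple graph `G`, if `deg(v) > deg(w)` then `ℓ_v^(1) > ℓ_w^(1)`. -/
theorem wl_degree_consistency {V : Type*} [Fintype V] [DecidableEq V]
    (G : SimpleGraph V) [DecidableRel G.Adj] (v w : V)
    (h : G.degree v > G.degree w) :
    wlLabel G 1 v > wlLabel G 1 w := by
  have h0 : wlLabel G 0 = fun _ => 1 := rfl
  show wlStep G (wlLabel G 0) w < wlStep G (wlLabel G 0) v
  rw [h0]
  set ℓ : V → ℕ := fun _ => 1 with hℓ
  have hlt : wlMessage G ℓ w < wlMessage G ℓ v := by
    rw [wlMessage_one, wlMessage_one, Prod.Lex.lt_iff]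
    exact Or.inr ⟨rfl, wl_rep_lt h⟩
  unfold wlStep
  apply Finset.card_lt_card
  constructor
  · intro m hm
    simp only [Finset.mem_filter] at hm ⊢
    exact ⟨hm.1, lt_trans hm.2 hlt⟩
  · intro hsub
    have hmem : wlMessage G ℓ w ∈
        ((Finset.univ.image (wlMessage G ℓ)).filter (fun m => m < wlMessage G ℓ v)) := by
      simp only [Finset.mem_filter, Finset.mem_image]
      exact ⟨⟨w, Finset.mem_univ w, rfl⟩, hlt⟩
    have := hsub hmem
    simp only [Finset.mem_filter] at this
    exact lt_irrefl _ this.2
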